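/- arXiv:2411.13336 — 3 statements merged into one kernel-verified Lean document; each statement's English description precedes it below -/
import Mathlib

section
/- Let X, Y be compact metric spaces and (F_n) a sequence of upper semicontinuous set-valued functions F_n : X → (nonempty closed subsets of Y) satisfying: (1) F_{n+1}(x) ⊆ F_n(x) for all n, x; (2) diam(F_n(x)) → 0 for all x; (3) ⋃_{x ∈ X} F_n(x) = Y for all n. Then the map f : X → Y defined by {f(x)} = ⋂_n F_n(x) is continuous and surjective. -/
/-!
Since the sets `F n x` are nested nonempty compacta whose diameters tend to `0`, they shrink to a
single point `f x`, and upper semicontinuity of `F n` at `x` then gives continuity of `f` at `x`.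
For surjectivity, the sets `{x | y ∈ F n x}` are closed (upper semicontinuity, applied to the
open set `Y \ {y}`), nonempty (they cover) and nested, so by compactness of `X` some `x` lies in
all of them, i.e. `y ∈ ⋂ n, F n x = {f x}`.
-/

open Filter Topology Metric

/-- `F` is upper semicontinuous as a set-valued map. -/
def UpperSemicontinuousSetValued {X Y : Type*} [TopologicalSpace X] [TopologicalSpace Y]
    (F : X → Set Y) : Prop :=
  ∀ x : X, ∀ V : Set Y, IsOpen V → F x ⊆ V →
    ∃ U : Set X, IsOpen U ∧ x ∈ U ∧ ∀ u ∈ U, F u ⊆ V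

section

variable {X Y : Type*}

theorem Metric.tendsto_smallSets_nhds_of_tendsto_diam [PseudoMetricSpace Y] {s : ℕ → Set Y}
    {y : Y} (hbdd : ∀ n, Bornology.IsBounded (s n)) (hy : ∀ n, y ∈ s n)
    (hdiam : Tendsto (fun n => diam (s n)) atTop (𝓝 0)) :
    Tendsto s atTop (𝓝 y).smallSets :=
  ((tendsto_closedBall_smallSets y).comp hdiam).smallSets_mono <| Eventually.of_forall
    fun n _ hz => mem_closedBall.2 (dist_le_diam_of_mem (hbdd n) hz (hy n))

theorem Set.iInter_eq_singleton_of_tendsto_smallSets [TopologicalSpace Y] [T1Space Y]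
    {s : ℕ → Set Y} {y : Y} (hs : Tendsto s atTop (𝓝 y).smallSets) (hy : ∀ n, y ∈ s n) :
    ⋂ n, s n = {y} := by
  refine Set.eq_singleton_iff_unique_mem.2 ⟨Set.mem_iInter.2 hy, fun z hz => ?_⟩
  by_contra hzy
  obtain ⟨n, hn⟩ :=
    (tendsto_smallSets_iff.1 hs _ (isOpen_compl_singleton.mem_nhds (Ne.symm hzy))).exists
  exact hn (Set.mem_iInter.1 hz n) rfl

section UpperSemicontinuousSetValued

variable [TopologicalSpace X] [TopologicalSpace Y]

theorem UpperSemicontinuousSetValued.isClosed_setOf_mem [T1Space Y] {F : X → Set Y}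
    (hF : UpperSemicontinuousSetValued F) (y : Y) : IsClosed {x | y ∈ F x} := by
  refine isOpen_compl_iff.1 (isOpen_iff_forall_mem_open.2 fun x hx => ?_)
  obtain ⟨U, hUo, hxU, hU⟩ :=
    hF x {y}ᶜ isOpen_compl_singleton (Set.subset_compl_singleton_iff.2 hx)
  exact ⟨U, fun u hu hyu => hU u hu hyu rfl, hUo, hxU⟩

theorem continuous_of_forall_mem_of_tendsto_smallSets {F : ℕ → X → Set Y} {f : X → Y}
    (husc : ∀ n, UpperSemicontinuousSetValued (F n)) (hf : ∀ n x, f x ∈ F n x)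
    (hshrink : ∀ x, Tendsto (fun n => F n x) atTop (𝓝 (f x)).smallSets) : Continuous f := by
  refine continuous_iff_continuousAt.2 fun x V hV => ?_
  obtain ⟨n, hn⟩ := (tendsto_smallSets_iff.1 (hshrink x) _ (interior_mem_nhds.2 hV)).exists
  obtain ⟨U, hUo, hxU, hU⟩ := husc n x _ isOpen_interior hn
  exact mem_map.2 <| mem_of_superset (hUo.mem_nhds hxU) fun u hu => interior_subset (s := V) (hU u hu (hf n u))

theorem exists_forall_mem_of_upperSemicontinuousSetValued [CompactSpace X] [T1Space Y]
    {F : ℕ → X → Set Y} (husc : ∀ n, UpperSemicontinuousSetValued (F n))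
    (hnest : ∀ n x, F (n + 1) x ⊆ F n x) {y : Y} (hcover : ∀ n, ∃ x, y ∈ F n x) :
    ∃ x, ∀ n, y ∈ F n x := by
  have hclosed n := (husc n).isClosed_setOf_mem y
  obtain ⟨x, hx⟩ := IsCompact.nonempty_iInter_of_sequence_nonempty_isCompact_isClosed
    (fun n => {x | y ∈ F n x}) (fun n x hx => hnest n x hx) hcover (hclosed 0).isCompact hclosed
  exact ⟨x, fun n => Set.mem_iInter.1 hx n⟩

end UpperSemicontinuousSetValued

end

theorem nadler_usc_limit_continuous_surjective
    {X Y : Type*} [MetricSpace X] [CompactSpace X] [MetricSpace Y] [CompactSpace Y]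
    (F : ℕ → X → Set Y)
    (husc : ∀ n, UpperSemicontinuousSetValued (F n))
    (hne : ∀ n x, (F n x).Nonempty)
    (hcl : ∀ n x, IsClosed (F n x))
    (hnest : ∀ n x, F (n + 1) x ⊆ F n x)
    (hdiam : ∀ x, Filter.Tendsto (fun n => Metric.diam (F n x)) Filter.atTop (nhds 0))
    (hcover : ∀ n, (⋃ x : X, F n x) = Set.univ) :
    ∃ f : X → Y, Continuous f ∧ Function.Surjective f ∧ ∀ x, (⋂ n, F n x) = {f x} := by
  choose f hf using fun x => IsCompact.nonempty_iInter_of_sequence_nonempty_isCompact_isClosed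
    (F · x) (hnest · x) (hne · x) (hcl 0 x).isCompact (hcl · x)
  have hfmem n x : f x ∈ F n x := Set.mem_iInter.1 (hf x) n
  have hshrink x : Tendsto (fun n => F n x) atTop (𝓝 (f x)).smallSets :=
    tendsto_smallSets_nhds_of_tendsto_diam (fun _ => isBounded_of_compactSpace)
      (hfmem · x) (hdiam x)
  have hsingleton x : ⋂ n, F n x = {f x} :=
    Set.iInter_eq_singleton_of_tendsto_smallSets (hshrink x) (hfmem · x)
  refine ⟨f, continuous_of_forall_mem_of_tendsto_smallSets husc hfmem hshrink, fun y => ?_,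
    hsingleton⟩
  obtain ⟨x, hx⟩ := exists_forall_mem_of_upperSemicontinuousSetValued husc hnest
    fun n => Set.iUnion_eq_univ_iff.1 (hcover n) y
  exact ⟨x, ((hsingleton x).subset (Set.mem_iInter.2 hx)).symm⟩
end

section
/- Let G_0 ← G_1 ← ... be an inverse sequence of finite directed graphs with +directional, edge-surjective bonding maps, where every vertex of every G_i has at least one outgoing edge. Define V_G as the inverse limit of vertex sets and E_G = {(x,y) ∈ V_G × V_G : (x_i, y_i) ∈ E_i for all i}. Then E_G is the graph of a function, i.e., for every x ∈ V_G there exists a unique y ∈ V_G with (x,y) ∈ E_G. -/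
/-! Choose any successor `w i` of `x i` at every level. Since the bonding maps are
+directional, `φ i` sends all successors of `x (i + 1)` to the same vertex, so
`y i := φ i (w (i + 1))` does not depend on the choices; it is adjacent to `x i` because `φ i`
is a graph homomorphism, and it is a thread because `y (i + 1)` is itself a successor of
`x (i + 1)`. The same observation shows that any two successor threads agree. -/

/-- `φ` is a graph homomorphism from `(V, E)` to `(V', E')`. -/
def IsGraphHom {V V' : Type*} (E : V → V → Prop) (E' : V' → V' → Prop) (φ : V → V') : Prop :=
  ∀ u v, E u v → E' (φ u) (φ v)

/-- `φ` is edge-surjective. -/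
def IsEdgeSurjective {V V' : Type*} (E : V → V → Prop) (E' : V' → V' → Prop) (φ : V → V') : Prop :=
  ∀ u' v', E' u' v' → ∃ u v, E u v ∧ φ u = u' ∧ φ v = v'

/-- `φ` is +directional. -/
def IsPlusDirectional {V V' : Type*} (E : V → V → Prop) (φ : V → V') : Prop :=
  ∀ u v v', E u v → E u v' → φ v = φ v'

/-- `φ` is a cover. -/
def IsGraphCover {V V' : Type*} (E : V → V → Prop) (E' : V' → V' → Prop) (φ : V → V') : Prop :=
  IsGraphHom E E' φ ∧ IsEdgeSurjective E E' φ ∧ IsPlusDirectional E φ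

section InverseSequence

variable {V : ℕ → Type*} {E : ∀ i, V i → V i → Prop} {φ : ∀ i, V (i + 1) → V i}

theorem eq_of_forall_adj_of_plusDirectional (hdir : ∀ i, IsPlusDirectional (E (i + 1)) (φ i))
    {x y z : ∀ i, V i} (hy : ∀ i, y i = φ i (y (i + 1))) (hz : ∀ i, z i = φ i (z (i + 1)))
    (hxy : ∀ i, E i (x i) (y i)) (hxz : ∀ i, E i (x i) (z i)) : y = z :=
  funext fun i => by
    rw [hy i, hz i]
    exact hdir i _ _ _ (hxy (i + 1)) (hxz (i + 1))

theorem exists_thread_forall_adj (hhom : ∀ i, IsGraphHom (E (i + 1)) (E i) (φ i))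
    (hdir : ∀ i, IsPlusDirectional (E (i + 1)) (φ i)) (hout : ∀ i (v : V i), ∃ w, E i v w)
    {x : ∀ i, V i} (hx : ∀ i, x i = φ i (x (i + 1))) :
    ∃ y : ∀ i, V i, (∀ i, y i = φ i (y (i + 1))) ∧ ∀ i, E i (x i) (y i) := by
  choose w hw using fun i => hout i (x i)
  have hxy : ∀ i, E i (x i) (φ i (w (i + 1))) := fun i => by
    simpa only [← hx i] using hhom i _ _ (hw (i + 1))
  exact ⟨fun i => φ i (w (i + 1)), fun i => hdir i _ _ _ (hw (i + 1)) (hxy (i + 1)), hxy⟩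

end InverseSequence

theorem inverse_limit_relation_is_function_general
    (V : ℕ → Type*)
    (E : ∀ i, V i → V i → Prop)
    (φ : ∀ i, V (i + 1) → V i)
    (hcover : ∀ i, IsGraphCover (E (i + 1)) (E i) (φ i))
    (hout : ∀ i (v : V i), ∃ w : V i, E i v w)
    (x : {x : ∀ i, V i // ∀ i, x i = φ i (x (i + 1))}) :
    ∃! y : {x : ∀ i, V i // ∀ i, x i = φ i (x (i + 1))},
      ∀ i, E i (x.1 i) (y.1 i) := by
  have hdir : ∀ i, IsPlusDirectional (E (i + 1)) (φ i) := fun i => (hcover i).2.2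
  obtain ⟨y, hy, hxy⟩ := exists_thread_forall_adj (fun i => (hcover i).1) hdir hout x.2
  exact ⟨⟨y, hy⟩, hxy, fun z hxz =>
    Subtype.ext (eq_of_forall_adj_of_plusDirectional hdir z.2 hy hxz hxy)⟩

theorem inverse_limit_relation_is_function
    (V : ℕ → Type*) [∀ i, Fintype (V i)]
    (E : ∀ i, V i → V i → Prop)
    (φ : ∀ i, V (i + 1) → V i)
    (hcover : ∀ i, IsGraphCover (E (i + 1)) (E i) (φ i))
    (hout : ∀ i (v : V i), ∃ w : V i, E i v w)
    (x : {x : ∀ i, V i // ∀ i, x i = φ i (x (i + 1))}) :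
    ∃! y : {x : ∀ i, V i // ∀ i, x i = φ i (x (i + 1))},
      ∀ i, E i (x.1 i) (y.1 i) :=
  inverse_limit_relation_is_function_general V E φ hcover hout x
end

section
/- Let (C, f) be a surjective Cantor dynamical system and (U_i) a sequence of finite clopen partitions of C with U_{i+1} refining f⁻¹(U_i) ∨ U_i and mesh(U_i) → 0 (U_0 = {C}). Let V_U be the inverse limit of the graphs (U_i, f^{U_i}) under the inclusion-induced bonding maps, and E_U the induced relation. Then the map h : C → V_U sending x to the sequence (U_i(x)) of partition elements containing x is a homeomorphism conjugating f with the map determined by E_U, i.e., (V_U, E_U) is topologically conjugate to (C, f). -/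
/-- A copy of `α` carrying the discrete topology. -/
def Disc (α : Type*) : Type _ := α

/-- The underlying element of `α` of a point of `Disc α`. -/
def Disc.out {α : Type*} (a : Disc α) : α := a

instance {α : Type*} : TopologicalSpace (Disc α) := ⊥

instance {α : Type*} : DiscreteTopology (Disc α) := ⟨rfl⟩

/-- `𝒰` is a finite partition of the whole space into nonempty clopen sets. -/
def IsClopenPartition {C : Type*} [TopologicalSpace C] (𝒰 : Set (Set C)) : Prop :=
  𝒰.Finite ∧ (∀ A ∈ 𝒰, A.Nonempty) ∧ (∀ A ∈ 𝒰, IsClopen A) ∧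
    (∀ A ∈ 𝒰, ∀ B ∈ 𝒰, A ≠ B → Disjoint A B) ∧ ⋃₀ 𝒰 = Set.univ


/-!
The coding `x ↦ (𝒰 i (x))ᵢ` is continuous because partition elements are clopen, injective
because the mesh tends to zero, and surjective because a decreasing sequence of nonempty closed
sets in a compact space has a point in common; being a continuous bijection from a compact space
onto a Hausdorff one, it is a homeomorphism. For the conjugacy, if `f (𝒰 i (x))` meets `zᵢ` for
every `i`, pick `wᵢ ∈ 𝒰 i (x)` with `f wᵢ ∈ zᵢ`: then `wᵢ → x`, so `f wᵢ → f x`, and `f x` lies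
in every `zᵢ` since these are closed and decreasing.
-/

open Filter Topology

namespace IsClopenPartition

variable {C : Type*} [TopologicalSpace C] {𝒰 : Set (Set C)}

theorem exists_mem (h : IsClopenPartition 𝒰) (x : C) : ∃ A ∈ 𝒰, x ∈ A :=
  Set.mem_sUnion.mp (by rw [h.2.2.2.2]; trivial)

theorem eq_of_mem (h : IsClopenPartition 𝒰) {A B : Set C} (hA : A ∈ 𝒰) (hB : B ∈ 𝒰) {x : C}
    (hxA : x ∈ A) (hxB : x ∈ B) : A = B := by
  by_contra hne
  exact Set.disjoint_left.mp (h.2.2.2.1 A hA B hB hne) hxA hxB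

noncomputable def part (h : IsClopenPartition 𝒰) (x : C) : Set C := (h.exists_mem x).choose

theorem part_mem (h : IsClopenPartition 𝒰) (x : C) : h.part x ∈ 𝒰 :=
  (h.exists_mem x).choose_spec.1

theorem mem_part (h : IsClopenPartition 𝒰) (x : C) : x ∈ h.part x :=
  (h.exists_mem x).choose_spec.2

theorem part_eq (h : IsClopenPartition 𝒰) {A : Set C} (hA : A ∈ 𝒰) {x : C} (hx : x ∈ A) :
    h.part x = A :=
  h.eq_of_mem (h.part_mem x) hA (h.mem_part x) hx

theorem isLocallyConstant_part (h : IsClopenPartition 𝒰) : IsLocallyConstant h.part :=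
  (IsLocallyConstant.iff_exists_open _).mpr fun x =>
    ⟨h.part x, (h.2.2.1 _ (h.part_mem x)).isOpen, h.mem_part x,
      fun _ hy => h.part_eq (h.part_mem x) hy⟩

end IsClopenPartition

theorem tendsto_of_forall_mem_of_diam_lt {C : Type*} [PseudoMetricSpace C] [BoundedSpace C]
    {𝒰 : ℕ → Set (Set C)} (hmesh : ∀ ε > (0 : ℝ), ∃ N : ℕ, ∀ i ≥ N, ∀ A ∈ 𝒰 i, Metric.diam A < ε)
    {A : ℕ → Set C} (hA : ∀ i, A i ∈ 𝒰 i) {x : C} {w : ℕ → C} (hx : ∀ i, x ∈ A i)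
    (hw : ∀ i, w i ∈ A i) : Tendsto w atTop (𝓝 x) := by
  refine Metric.tendsto_atTop.mpr fun ε hε => ?_
  obtain ⟨N, hN⟩ := hmesh ε hε
  exact ⟨N, fun i hi => (Metric.dist_le_diam_of_mem (.all _) (hw i) (hx i)).trans_lt
    (hN i hi _ (hA i))⟩

section PartitionLimit

variable {C : Type*} {𝒰 : ℕ → Set (Set C)}

/-- The space `V_𝒰` of the paper: threads of the inverse limit of the partitions `𝒰 i` under
the bonding maps `V ↦ (the element of 𝒰 i containing V)`. -/
abbrev PartitionLimit (𝒰 : ℕ → Set (Set C)) : Type _ :=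
  {x : ℕ → Disc (Set C) // (∀ i, (x i).out ∈ 𝒰 i) ∧ ∀ i, (x (i + 1)).out ⊆ (x i).out}

theorem PartitionLimit.antitone (z : PartitionLimit 𝒰) : Antitone fun i => (z.1 i).out :=
  antitone_nat_of_succ_le z.2.2

variable [TopologicalSpace C] (hpart : ∀ i, IsClopenPartition (𝒰 i))
  (hnest : ∀ i, ∀ A ∈ 𝒰 (i + 1), ∃ B ∈ 𝒰 i, A ⊆ B)
include hpart hnest

theorem part_succ_subset (i : ℕ) (x : C) : (hpart (i + 1)).part x ⊆ (hpart i).part x := by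
  obtain ⟨B, hB, hsub⟩ := hnest i _ ((hpart (i + 1)).part_mem x)
  rwa [(hpart i).part_eq hB (hsub ((hpart (i + 1)).mem_part x))]

/-- The map `h : x ↦ (𝒰 i (x))ᵢ` of the paper. -/
noncomputable def partitionCode (x : C) : PartitionLimit 𝒰 :=
  ⟨fun i => (hpart i).part x, fun i => (hpart i).part_mem x,
    fun i => part_succ_subset hpart hnest i x⟩

theorem eq_partitionCode_iff (z : PartitionLimit 𝒰) (x : C) :
    z = partitionCode hpart hnest x ↔ ∀ i, x ∈ (z.1 i).out := by
  refine ⟨fun h i => h ▸ (hpart i).mem_part x, fun h => Subtype.ext (funext fun i => ?_)⟩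
  exact ((hpart i).part_eq (z.2.1 i) (h i)).symm

theorem continuous_partitionCode : Continuous (partitionCode hpart hnest) := by
  refine continuous_induced_rng.mpr (continuous_pi fun i => ?_)
  exact (hpart i).isLocallyConstant_part.continuous (Y := Disc (Set C))

theorem partitionCode_surjective [CompactSpace C] :
    Function.Surjective (partitionCode hpart hnest) := by
  intro z
  have hclosed i : IsClosed (z.1 i).out := ((hpart i).2.2.1 _ (z.2.1 i)).isClosed
  obtain ⟨x, hx⟩ := IsCompact.nonempty_iInter_of_sequence_nonempty_isCompact_isClosed _ z.2.2
    (fun i => (hpart i).2.1 _ (z.2.1 i)) (hclosed 0).isCompact hclosed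
  exact ⟨x, ((eq_partitionCode_iff hpart hnest z x).mpr (Set.mem_iInter.mp hx)).symm⟩

end PartitionLimit

section Metric

variable {C : Type*} [MetricSpace C] {𝒰 : ℕ → Set (Set C)}
  (hpart : ∀ i, IsClopenPartition (𝒰 i)) (hnest : ∀ i, ∀ A ∈ 𝒰 (i + 1), ∃ B ∈ 𝒰 i, A ⊆ B)
  (hmesh : ∀ ε > (0 : ℝ), ∃ N : ℕ, ∀ i ≥ N, ∀ A ∈ 𝒰 i, Metric.diam A < ε)
include hpart hnest hmesh

theorem partitionCode_injective [BoundedSpace C] :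
    Function.Injective (partitionCode hpart hnest) := by
  intro x y hxy
  have hy : ∀ i, y ∈ (hpart i).part x := (eq_partitionCode_iff hpart hnest _ y).mp hxy
  exact (tendsto_nhds_unique tendsto_const_nhds <| tendsto_of_forall_mem_of_diam_lt hmesh
    (fun i => (hpart i).part_mem x) (fun i => (hpart i).mem_part x) hy).symm

noncomputable def partitionCodeHomeomorph [CompactSpace C] : C ≃ₜ PartitionLimit 𝒰 :=
  (continuous_partitionCode hpart hnest).homeoOfEquivCompactToT2
    (f := .ofBijective _ ⟨partitionCode_injective hpart hnest hmesh,
      partitionCode_surjective hpart hnest⟩)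

theorem partitionCodeHomeomorph_apply [CompactSpace C] (x : C) :
    partitionCodeHomeomorph hpart hnest hmesh x = partitionCode hpart hnest x :=
  rfl

theorem forall_image_inter_nonempty_iff [BoundedSpace C] {f : C → C} (hf : Continuous f) (x : C)
    (z : PartitionLimit 𝒰) :
    (∀ i, (f '' (hpart i).part x ∩ (z.1 i).out).Nonempty) ↔
      z = partitionCode hpart hnest (f x) := by
  rw [eq_partitionCode_iff]
  constructor
  · intro hne i
    choose y hy using hne
    choose w hw hfw using fun j => (hy j).1
    have hlim : Tendsto (f ∘ w) atTop (𝓝 (f x)) := (hf.tendsto x).comp <|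
      tendsto_of_forall_mem_of_diam_lt hmesh (fun j => (hpart j).part_mem x)
        (fun j => (hpart j).mem_part x) hw
    refine ((hpart i).2.2.1 _ (z.2.1 i)).isClosed.mem_of_tendsto hlim ?_
    refine eventually_atTop.mpr ⟨i, fun j hj => ?_⟩
    rw [Function.comp_apply, hfw j]
    exact z.antitone hj (hy j).2
  · exact fun hz i => ⟨f x, Set.mem_image_of_mem f ((hpart i).mem_part x), hz i⟩

end Metric

theorem inverse_limit_of_partitions_conjugate_general
    {C : Type*} [MetricSpace C] [CompactSpace C]
    (f : C → C) (hf : Continuous f)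
    (𝒰 : ℕ → Set (Set C))
    (hpart : ∀ i, IsClopenPartition (𝒰 i))
    (href : ∀ i, ∀ A ∈ 𝒰 (i + 1), ∃ B ∈ 𝒰 i, ∃ B' ∈ 𝒰 i, A ⊆ f ⁻¹' B ∩ B')
    (hmesh : ∀ ε > (0 : ℝ), ∃ N : ℕ, ∀ i ≥ N, ∀ A ∈ 𝒰 i, Metric.diam A < ε) :
    ∃ h : C ≃ₜ {x : ℕ → Disc (Set C) //
        (∀ i, (x i).out ∈ 𝒰 i) ∧ ∀ i, (x (i + 1)).out ⊆ (x i).out},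
      (∀ (x : C) (i : ℕ), x ∈ ((h x).1 i).out) ∧
      ∀ y z : {x : ℕ → Disc (Set C) //
          (∀ i, (x i).out ∈ 𝒰 i) ∧ ∀ i, (x (i + 1)).out ⊆ (x i).out},
        ((∀ i, ((f '' (y.1 i).out) ∩ (z.1 i).out).Nonempty) ↔
          z = h (f (h.symm y))) := by
  have hnest : ∀ i, ∀ A ∈ 𝒰 (i + 1), ∃ B ∈ 𝒰 i, A ⊆ B := fun i A hA => by
    obtain ⟨_, _, B, hB, hAB⟩ := href i A hA
    exact ⟨B, hB, hAB.trans Set.inter_subset_right⟩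
  let h := partitionCodeHomeomorph hpart hnest hmesh
  refine ⟨h, fun x i => (hpart i).mem_part x, fun y z => ?_⟩
  obtain ⟨x, rfl⟩ := h.surjective y
  rw [h.symm_apply_apply, partitionCodeHomeomorph_apply]
  exact forall_image_inter_nonempty_iff hpart hnest hmesh hf x z

theorem inverse_limit_of_partitions_conjugate
    {C : Type*} [MetricSpace C] [CompactSpace C]
    (f : C → C) (hf : Continuous f) (hsurj : Function.Surjective f)
    (𝒰 : ℕ → Set (Set C))
    (h0 : 𝒰 0 = {Set.univ})
    (hpart : ∀ i, IsClopenPartition (𝒰 i))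
    (href : ∀ i, ∀ A ∈ 𝒰 (i + 1), ∃ B ∈ 𝒰 i, ∃ B' ∈ 𝒰 i, A ⊆ f ⁻¹' B ∩ B')
    (hmesh : ∀ ε > (0 : ℝ), ∃ N : ℕ, ∀ i ≥ N, ∀ A ∈ 𝒰 i, Metric.diam A < ε) :
    ∃ h : C ≃ₜ {x : ℕ → Disc (Set C) //
        (∀ i, (x i).out ∈ 𝒰 i) ∧ ∀ i, (x (i + 1)).out ⊆ (x i).out},
      (∀ (x : C) (i : ℕ), x ∈ ((h x).1 i).out) ∧
      ∀ y z : {x : ℕ → Disc (Set C) //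
          (∀ i, (x i).out ∈ 𝒰 i) ∧ ∀ i, (x (i + 1)).out ⊆ (x i).out},
        ((∀ i, ((f '' (y.1 i).out) ∩ (z.1 i).out).Nonempty) ↔
          z = h (f (h.symm y))) :=
  inverse_limit_of_partitions_conjugate_general f hf 𝒰 hpart href hmesh
end
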